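/- Let H be an n-quasicluster that is edge arithmetic with pairwise distinct central edges. Then the chromatic number of H is at most n. -/

import Mathlib

/-!
The labels `F(u)` of the edges through a vertex `u` are invariant under a reflection
`x ↦ s(u) - x` of `ZMod n`, with `s(u)` the first label of one progression plus the last
label of the other (of the same one if `F(u)` is a single progression). The reflection fixes
a label of `F(u)` only when `F(u)` is one progression of odd length, and the fixed label is
then the central edge of `u`. Colour `u` by `s(u)`. If two vertices `u ≠ w` of an edge `e`
got the same colour `s`, then `s - φ(e)` would lie in `F(u) ∩ F(w) = {φ(e)}` by linearity,
so `φ(e)` would be the central edge of both `u` and `w`.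
-/

/-- `S ⊆ ZMod n` is a `k`-arithmetic progression of length `l`, enumerated (with
distinct values) by `v 1, …, v l` with consecutive differences `k`. -/
def IsArithProg (n : ℕ) (k : ℕ) (v : ℕ → ZMod n) (l : ℕ)
    (S : Finset (ZMod n)) : Prop :=
  (∀ j, 1 ≤ j → j < l → v (j + 1) - v j = (k : ZMod n)) ∧
  (∀ j j', 1 ≤ j → j ≤ l → 1 ≤ j' → j' ≤ l → v j = v j' → j = j') ∧
  S = (Finset.Icc 1 l).image v

namespace IsArithProg

variable {n k l : ℕ} {v w : ℕ → ZMod n} {A B S : Finset (ZMod n)} {x : ZMod n}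

lemma mem_iff (h : IsArithProg n k v l S) : x ∈ S ↔ ∃ j, 1 ≤ j ∧ j ≤ l ∧ v j = x := by
  simp [h.2.2, and_assoc]

lemma card_eq (h : IsArithProg n k v l S) : S.card = l := by
  rw [h.2.2, Finset.card_image_of_injOn, Nat.card_Icc, Nat.add_sub_cancel]
  intro a ha b hb hab
  simp only [Finset.coe_Icc, Set.mem_Icc] at ha hb
  exact h.2.1 a b ha.1 ha.2 hb.1 hb.2 hab

lemma apply_eq (h : IsArithProg n k v l S) {j : ℕ} (hj : 1 ≤ j) (hjl : j ≤ l) :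
    v j = v 1 + ((j - 1 : ℕ) : ZMod n) * k := by
  induction j with
  | zero => omega
  | succ i ih =>
    rcases Nat.eq_zero_or_pos i with rfl | hi
    · simp
    have hstep := h.1 i hi (by omega)
    rw [ih hi (by omega)] at hstep
    rw [show i + 1 - 1 = (i - 1) + 1 by omega]
    push_cast
    linear_combination hstep

lemma first_add_last_sub (hA : IsArithProg n k v l A) (hB : IsArithProg n k w l B)
    {j : ℕ} (hj : 1 ≤ j) (hjl : j ≤ l) :
    v 1 + w l - v j = w (l + 1 - j) := by
  rw [hA.apply_eq hj hjl, hB.apply_eq (hj.trans hjl) le_rfl,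
    hB.apply_eq (by omega : 1 ≤ l + 1 - j) (by omega),
    show l - 1 = (l + 1 - j - 1) + (j - 1) by omega]
  push_cast
  ring

lemma first_add_last_sub_mem (hA : IsArithProg n k v l A) (hB : IsArithProg n k w l B)
    (hx : x ∈ A) : v 1 + w l - x ∈ B := by
  obtain ⟨j, hj, hjl, rfl⟩ := hA.mem_iff.mp hx
  rw [hA.first_add_last_sub hB hj hjl, hB.mem_iff]
  exact ⟨l + 1 - j, by omega, by omega, rfl⟩

lemma first_add_last_comm (hA : IsArithProg n k v l A) (hB : IsArithProg n k w l B)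
    (hl : 1 ≤ l) : v 1 + w l = w 1 + v l := by
  rw [hA.apply_eq hl le_rfl, hB.apply_eq hl le_rfl]
  ring

lemma first_add_last_sub_mem_of_mem_right (hA : IsArithProg n k v l A)
    (hB : IsArithProg n k w l B) (hx : x ∈ B) : v 1 + w l - x ∈ A := by
  obtain ⟨j, hj, hjl, -⟩ := hB.mem_iff.mp hx
  rw [hA.first_add_last_comm hB (hj.trans hjl)]
  exact hB.first_add_last_sub_mem hA hx

lemma odd_and_eq_middle_of_add_self (h : IsArithProg n k v l S) (hx : x ∈ S)
    (hxx : x + x = v 1 + v l) : Odd l ∧ x = v ((l + 1) / 2) := by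
  obtain ⟨j, hj, hjl, rfl⟩ := h.mem_iff.mp hx
  have hfix : v (l + 1 - j) = v j := by
    rw [← h.first_add_last_sub h hj hjl, ← hxx]
    ring
  have hmid : l + 1 - j = j := h.2.1 _ _ (by omega) (by omega) hj hjl hfix
  exact ⟨⟨j - 1, by omega⟩, by rw [show (l + 1) / 2 = j by omega]⟩

end IsArithProg

lemma exists_reflection_of_isArithProg {n : ℕ} {S : Finset (ZMod n)} {c : ZMod n}
    (harith : ∃ k, (∃ l v, IsArithProg n k v l S) ∨
      (∃ l v w A B, IsArithProg n k v l A ∧ IsArithProg n k w l B ∧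
        Disjoint A B ∧ S = A ∪ B))
    (hcentral : Odd S.card → ∃ k l v, IsArithProg n k v l S ∧ c = v ((l + 1) / 2)) :
    ∃ s, (∀ x ∈ S, s - x ∈ S) ∧ ∀ x ∈ S, x + x = s → Odd S.card ∧ x = c := by
  by_cases hodd : Odd S.card
  · obtain ⟨k, l, v, hS, hc⟩ := hcentral hodd
    refine ⟨v 1 + v l, fun x hx => hS.first_add_last_sub_mem hS hx, fun x hx hxx => ?_⟩
    exact ⟨hodd, hc ▸ (hS.odd_and_eq_middle_of_add_self hx hxx).2⟩
  obtain ⟨k, ⟨l, v, hS⟩ | ⟨l, v, w, A, B, hA, hB, hAB, rfl⟩⟩ := harith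
  · refine ⟨v 1 + v l, fun x hx => hS.first_add_last_sub_mem hS hx, fun x hx hxx => ?_⟩
    exact absurd (hS.card_eq ▸ (hS.odd_and_eq_middle_of_add_self hx hxx).1) hodd
  · refine ⟨v 1 + w l, fun x hx => ?_, fun x hx hxx => ?_⟩
    · rcases Finset.mem_union.mp hx with hxA | hxB
      · exact Finset.mem_union_right _ (hA.first_add_last_sub_mem hB hxA)
      · exact Finset.mem_union_left _ (hA.first_add_last_sub_mem_of_mem_right hB hxB)
    · have hfix : v 1 + w l - x = x := by rw [← hxx, add_sub_cancel_right]
      rcases Finset.mem_union.mp hx with hxA | hxB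
      · exact (Finset.disjoint_left.mp hAB hxA (hfix ▸ hA.first_add_last_sub_mem hB hxA)).elim
      · exact (Finset.disjoint_right.mp hAB hxB
          (hfix ▸ hA.first_add_last_sub_mem_of_mem_right hB hxB)).elim

section Hypergraph

variable {α β : Type*} [DecidableEq α] [DecidableEq β]

def edgeLabels (E : Finset (Finset α)) (φ : Finset α → β) (u : α) : Finset β :=
  (E.filter (fun e => u ∈ e)).image φ

variable {E : Finset (Finset α)} {φ : Finset α → β}

lemma mem_edgeLabels {u : α} {x : β} : x ∈ edgeLabels E φ u ↔ ∃ e ∈ E, u ∈ e ∧ φ e = x := by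
  simp [edgeLabels, and_assoc]

lemma card_edgeLabels (hφ : Set.InjOn φ E) (u : α) :
    (edgeLabels E φ u).card = (E.filter (fun e => u ∈ e)).card :=
  Finset.card_image_of_injOn (hφ.mono (Finset.coe_subset.mpr (Finset.filter_subset _ _)))

lemma eq_of_mem_edgeLabels_of_mem_edgeLabels
    (hlinear : ∀ e ∈ E, ∀ f ∈ E, e ≠ f → (e ∩ f).card ≤ 1) (hφ : Set.InjOn φ E)
    {e : Finset α} (he : e ∈ E) {u w : α} (hu : u ∈ e) (hw : w ∈ e) (huw : u ≠ w) {x : β}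
    (hxu : x ∈ edgeLabels E φ u) (hxw : x ∈ edgeLabels E φ w) : x = φ e := by
  obtain ⟨f, hf, huf, rfl⟩ := mem_edgeLabels.mp hxu
  obtain ⟨f', hf', hwf', hff'⟩ := mem_edgeLabels.mp hxw
  obtain rfl : f' = f := hφ hf' hf hff'
  by_contra hef
  have : 1 < (e ∩ f').card :=
    Finset.one_lt_card.mpr ⟨u, by simp [hu, huf], w, by simp [hw, hwf'], huw⟩
  exact (hlinear e he f' hf (fun h => hef (congrArg φ h).symm)).not_gt this

lemma add_self_eq_of_reflection [AddCommGroup β]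
    (hlinear : ∀ e ∈ E, ∀ f ∈ E, e ≠ f → (e ∩ f).card ≤ 1) (hφ : Set.InjOn φ E)
    {e : Finset α} (he : e ∈ E) {u w : α} (hu : u ∈ e) (hw : w ∈ e) (huw : u ≠ w) {s : β}
    (hsu : ∀ x ∈ edgeLabels E φ u, s - x ∈ edgeLabels E φ u)
    (hsw : ∀ x ∈ edgeLabels E φ w, s - x ∈ edgeLabels E φ w) :
    φ e + φ e = s := by
  have heu : φ e ∈ edgeLabels E φ u := mem_edgeLabels.mpr ⟨e, he, hu, rfl⟩
  have hew : φ e ∈ edgeLabels E φ w := mem_edgeLabels.mpr ⟨e, he, hw, rfl⟩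
  have := eq_of_mem_edgeLabels_of_mem_edgeLabels hlinear hφ he hu hw huw (hsu _ heu) (hsw _ hew)
  exact (sub_eq_iff_eq_add.mp this).symm

end Hypergraph

theorem stmt14_general {α : Type*} [DecidableEq α] (n : ℕ)
    (E : Finset (Finset α))
    (hinter : ∀ e ∈ E, ∀ f ∈ E, e ≠ f → (e ∩ f).card = 1)
    (φ : Finset α → ZMod n)
    (hφinj : ∀ e ∈ E, ∀ f ∈ E, φ e = φ f → e = f)
    (harith : ∀ u : α, (∃ e ∈ E, u ∈ e) → ∃ k, 1 ≤ k ∧ k ≤ n / 2 ∧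
      ((∃ l v, IsArithProg n k v l ((E.filter (fun e => u ∈ e)).image φ)) ∨
       (∃ l v w A B, IsArithProg n k v l A ∧ IsArithProg n k w l B ∧
          Disjoint A B ∧ (E.filter (fun e => u ∈ e)).image φ = A ∪ B)))
    (centralLabel : α → ZMod n)
    (hcentral : ∀ u : α, (∃ e ∈ E, u ∈ e) →
      Odd (E.filter (fun e => u ∈ e)).card →
      ∃ k l v, 1 ≤ k ∧ k ≤ n / 2 ∧ Odd l ∧
        IsArithProg n k v l ((E.filter (fun e => u ∈ e)).image φ) ∧
        centralLabel u = v ((l + 1) / 2))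
    (hdistinct : ∀ u w : α, (∃ e ∈ E, u ∈ e) → (∃ e ∈ E, w ∈ e) →
      Odd (E.filter (fun e => u ∈ e)).card →
      Odd (E.filter (fun e => w ∈ e)).card →
      u ≠ w → centralLabel u ≠ centralLabel w) :
    ∃ c : α → ZMod n, ∀ e ∈ E, ∀ u ∈ e, ∀ v ∈ e, u ≠ v → c u ≠ c v := by
  have hlinear : ∀ e ∈ E, ∀ f ∈ E, e ≠ f → (e ∩ f).card ≤ 1 :=
    fun e he f hf hef => (hinter e he f hf hef).le
  have hreflect : ∀ u, ∃ s, (∀ x ∈ edgeLabels E φ u, s - x ∈ edgeLabels E φ u) ∧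
      ∀ x ∈ edgeLabels E φ u, x + x = s →
        Odd (E.filter (fun e => u ∈ e)).card ∧ x = centralLabel u := by
    intro u
    by_cases hu : ∃ e ∈ E, u ∈ e
    · obtain ⟨k, -, -, hS⟩ := harith u hu
      rw [← card_edgeLabels hφinj]
      refine exists_reflection_of_isArithProg ⟨k, hS⟩ fun hodd => ?_
      rw [card_edgeLabels hφinj] at hodd
      obtain ⟨k, l, v, -, -, -, hS, hc⟩ := hcentral u hu hodd
      exact ⟨k, l, v, hS, hc⟩
    · refine ⟨0, fun x hx => ?_, fun x hx => ?_⟩ <;>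
        obtain ⟨e, he, hue, -⟩ := mem_edgeLabels.mp hx <;> exact absurd ⟨e, he, hue⟩ hu
  choose s hsymm hfixed using hreflect
  refine ⟨s, fun e he u hu w hw huw hs => ?_⟩
  have hee := add_self_eq_of_reflection hlinear hφinj he hu hw huw (hsymm u) (hs ▸ hsymm w)
  obtain ⟨hoddu, hcu⟩ := hfixed u (φ e) (mem_edgeLabels.mpr ⟨e, he, hu, rfl⟩) hee
  obtain ⟨hoddw, hcw⟩ := hfixed w (φ e) (mem_edgeLabels.mpr ⟨e, he, hw, rfl⟩) (hs ▸ hee)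
  exact hdistinct u w ⟨e, he, hu⟩ ⟨e, he, hw⟩ hoddu hoddw huw (hcu.symm.trans hcw)

/-- Let `H` be an `n`-quasicluster (an intersecting linear hypergraph with `n`
edges, each of size at most `n` and at least `2`, every vertex in at least two
edges) that is edge arithmetic via a bijective labeling `φ : edges → ZMod n`,
with pairwise distinct central edges (given by `centralLabel`). Then
`χ(H) ≤ n`. -/
theorem stmt14 {α : Type*} [DecidableEq α] (n : ℕ) (hn : 2 ≤ n)
    (E : Finset (Finset α))
    (hcard : E.card = n)
    (hsize : ∀ e ∈ E, 2 ≤ e.card ∧ e.card ≤ n)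
    (hinter : ∀ e ∈ E, ∀ f ∈ E, e ≠ f → (e ∩ f).card = 1)
    (hdeg : ∀ u : α, (∃ e ∈ E, u ∈ e) →
      2 ≤ (E.filter (fun e => u ∈ e)).card)
    (φ : Finset α → ZMod n)
    (hφinj : ∀ e ∈ E, ∀ f ∈ E, φ e = φ f → e = f)
    (hφsurj : ∀ c : ZMod n, ∃ e ∈ E, φ e = c)
    (harith : ∀ u : α, (∃ e ∈ E, u ∈ e) → ∃ k, 1 ≤ k ∧ k ≤ n / 2 ∧
      ((∃ l v, IsArithProg n k v l ((E.filter (fun e => u ∈ e)).image φ)) ∨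
       (∃ l v w A B, IsArithProg n k v l A ∧ IsArithProg n k w l B ∧
          Disjoint A B ∧ (E.filter (fun e => u ∈ e)).image φ = A ∪ B)))
    (centralLabel : α → ZMod n)
    (hcentral : ∀ u : α, (∃ e ∈ E, u ∈ e) →
      Odd (E.filter (fun e => u ∈ e)).card →
      ∃ k l v, 1 ≤ k ∧ k ≤ n / 2 ∧ Odd l ∧
        IsArithProg n k v l ((E.filter (fun e => u ∈ e)).image φ) ∧
        centralLabel u = v ((l + 1) / 2))
    (hdistinct : ∀ u w : α, (∃ e ∈ E, u ∈ e) → (∃ e ∈ E, w ∈ e) →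
      Odd (E.filter (fun e => u ∈ e)).card →
      Odd (E.filter (fun e => w ∈ e)).card →
      u ≠ w → centralLabel u ≠ centralLabel w) :
    ∃ c : α → ZMod n, ∀ e ∈ E, ∀ u ∈ e, ∀ v ∈ e, u ≠ v → c u ≠ c v :=
  stmt14_general n E hinter φ hφinj harith centralLabel hcentral hdistinct
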